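/- arXiv:2108.06658 — 4 statements merged into one kernel-verified Lean document; each statement's English description precedes it below -/
import Mathlib

section
/- Let m be a positive integer, and let g : Fin m → ℝ be real values. Let 𝓑 ⊆ Fin m be the set of Byzantine indices with |𝓑| = α·m, and let 𝓜 = Fin m \ 𝓑 be the normal indices. Let 𝓒 ⊆ Fin m be a candidate set with |𝓒| ≥ (1−β)·m containing all of 𝓜 except at most β·m indices, where α ≤ β ≤ 1/2. Suppose μ ∈ ℝ satisfies: (i) |(1/|𝓒|)·∑_{i∈𝓜} (g i − μ)| ≤ (1−α)·m·t/|𝓒| for some t ≥ 0, and (ii) |g i − μ| ≤ 2s for every i ∈ 𝓒 and |g i − μ| ≤ s for every i ∈ 𝓜, for some s ≥ 0. If |𝓒| ≥ m/2, then (1/|𝓒|)·|∑_{i∈𝓒} (g i − μ)| ≤ (1/|𝓒|)·((1−α)·m·t + β·m·s + 2·α·m·s). -/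
open Finset

/-- Key decomposition step in Lemma 1 of BrSGD. -/
theorem stmt0 (m : ℕ) (hm : 0 < m) (g : Fin m → ℝ) (μ α β t s : ℝ)
    (B C : Finset (Fin m)) (M : Finset (Fin m)) (hM : M = Bᶜ)
    (hB : (B.card : ℝ) = α * m)
    (hC : (C.card : ℝ) ≥ (1 - β) * m)
    (hMC : ((M \ C).card : ℝ) ≤ β * m)
    (hαβ : α ≤ β) (hβ : β ≤ 1/2)
    (ht : 0 ≤ t) (hs : 0 ≤ s)
    (hmean : |(1 / (C.card : ℝ)) * ∑ i ∈ M, (g i - μ)| ≤ (1 - α) * m * t / C.card)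
    (hCbound : ∀ i ∈ C, |g i - μ| ≤ 2 * s)
    (hMbound : ∀ i ∈ M, |g i - μ| ≤ s)
    (hChalf : (C.card : ℝ) ≥ m / 2) :
    (1 / (C.card : ℝ)) * |∑ i ∈ C, (g i - μ)| ≤
      (1 / (C.card : ℝ)) * ((1 - α) * m * t + β * m * s + 2 * α * m * s) := by
  have hCpos : (0 : ℝ) < C.card := lt_of_lt_of_le (by positivity) hChalf
  set f : Fin m → ℝ := fun i => g i - μ with hf
  -- decomposition
  have hdecomp : ∑ i ∈ C, f i = (∑ i ∈ M, f i) - (∑ i ∈ M \ C, f i) + ∑ i ∈ C \ M, f i := by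
    have h1 : ∑ i ∈ M, f i = (∑ i ∈ M ∩ C, f i) + ∑ i ∈ M \ C, f i :=
      (Finset.sum_inter_add_sum_sdiff M C f).symm
    have h2 : ∑ i ∈ C, f i = (∑ i ∈ C ∩ M, f i) + ∑ i ∈ C \ M, f i :=
      (Finset.sum_inter_add_sum_sdiff C M f).symm
    rw [Finset.inter_comm] at h1
    rw [h2]
    linarith
  have hMsum : |∑ i ∈ M, f i| ≤ (1 - α) * m * t := by
    have h := hmean
    rw [abs_mul, abs_of_pos (by positivity : (0:ℝ) < 1 / (C.card:ℝ)), one_div,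
      inv_mul_eq_div] at h
    exact (div_le_div_iff_of_pos_right hCpos).mp h
  have hMCsum : |∑ i ∈ M \ C, f i| ≤ β * m * s := by
    calc |∑ i ∈ M \ C, f i| ≤ ∑ i ∈ M \ C, |f i| := Finset.abs_sum_le_sum_abs _ _
      _ ≤ ∑ _i ∈ M \ C, s := Finset.sum_le_sum fun i hi =>
          hMbound i (Finset.mem_sdiff.mp hi).1
      _ = ((M \ C).card : ℝ) * s := by rw [Finset.sum_const, nsmul_eq_mul]
      _ ≤ β * m * s := mul_le_mul_of_nonneg_right hMC hs
  have hCM : C \ M ⊆ B := by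
    intro i hi
    have := (Finset.mem_sdiff.mp hi).2
    rw [hM, Finset.mem_compl, not_not] at this
    exact this
  have hCMsum : |∑ i ∈ C \ M, f i| ≤ 2 * α * m * s := by
    calc |∑ i ∈ C \ M, f i| ≤ ∑ i ∈ C \ M, |f i| := Finset.abs_sum_le_sum_abs _ _
      _ ≤ ∑ _i ∈ C \ M, (2 * s) := Finset.sum_le_sum fun i hi =>
          hCbound i (Finset.mem_sdiff.mp hi).1
      _ = ((C \ M).card : ℝ) * (2 * s) := by rw [Finset.sum_const, nsmul_eq_mul]
      _ ≤ (B.card : ℝ) * (2 * s) := by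
          have := Finset.card_le_card hCM
          have : ((C \ M).card : ℝ) ≤ (B.card : ℝ) := by exact_mod_cast this
          nlinarith
      _ = 2 * α * m * s := by rw [hB]; ring
  have habs : |∑ i ∈ C, f i| ≤ (1 - α) * m * t + β * m * s + 2 * α * m * s := by
    rw [hdecomp]
    calc |(∑ i ∈ M, f i) - (∑ i ∈ M \ C, f i) + ∑ i ∈ C \ M, f i|
        ≤ |(∑ i ∈ M, f i) - (∑ i ∈ M \ C, f i)| + |∑ i ∈ C \ M, f i| := abs_add_le _ _
      _ ≤ |∑ i ∈ M, f i| + |∑ i ∈ M \ C, f i| + |∑ i ∈ C \ M, f i| := by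
          linarith [abs_sub (∑ i ∈ M, f i) (∑ i ∈ M \ C, f i)]
      _ ≤ (1 - α) * m * t + β * m * s + 2 * α * m * s := by linarith
  exact mul_le_mul_of_nonneg_left habs (by positivity)
end

section
/- Let m ≥ 1, let 𝓜 and 𝓑 partition Fin m with |𝓑| ≤ α·m where 0 ≤ α ≤ β ≤ 1/2, and let 𝓒 ⊆ Fin m with 𝓜 \ 𝓒 having at most β·m elements and |𝓒| ≥ m/2. Let g : Fin m → ℝ and μ ∈ ℝ. Assume |(1/m)·∑_{i∈𝓜} (g i − μ)| ≤ t·|𝓒|/m for some t ≥ 0, |g i − μ| ≤ s for all i ∈ 𝓜, and |g i − μ| ≤ 2s for all i ∈ 𝓑 ∩ 𝓒, for some s ≥ 0. Then |(1/|𝓒|)·∑_{i∈𝓒} g i − μ| ≤ t + 3·β·s·(m/|𝓒|); in particular, since m/|𝓒| ≤ 2, |(1/|𝓒|)·∑_{i∈𝓒} g i − μ| ≤ t + 6·β·s. -/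
open Finset

/-- Abstraction of Lemma 1 of BrSGD: robustness of trimmed averaging. -/
theorem stmt1 (m : ℕ) (hm : 1 ≤ m) (g : Fin m → ℝ) (μ α β t s : ℝ)
    (M B C : Finset (Fin m))
    (hpart : M = Bᶜ)
    (hB : (B.card : ℝ) ≤ α * m)
    (hα0 : 0 ≤ α) (hαβ : α ≤ β) (hβ : β ≤ 1/2)
    (hMC : ((M \ C).card : ℝ) ≤ β * m)
    (hChalf : (C.card : ℝ) ≥ m / 2)
    (ht : 0 ≤ t) (hs : 0 ≤ s)
    (hmean : |(1 / (m : ℝ)) * ∑ i ∈ M, (g i - μ)| ≤ t * C.card / m)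
    (hMbound : ∀ i ∈ M, |g i - μ| ≤ s)
    (hBC : ∀ i ∈ B ∩ C, |g i - μ| ≤ 2 * s) :
    |(1 / (C.card : ℝ)) * ∑ i ∈ C, g i - μ| ≤ t + 3 * β * s * (m / C.card) ∧
    |(1 / (C.card : ℝ)) * ∑ i ∈ C, g i - μ| ≤ t + 6 * β * s := by
  have hm' : (0:ℝ) < m := by exact_mod_cast hm
  have hc0 : (0:ℝ) < (C.card : ℝ) := lt_of_lt_of_le (by positivity) hChalf
  have hβ0 : 0 ≤ β := le_trans hα0 hαβ
  set c : ℝ := (C.card : ℝ) with hc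
  set f : Fin m → ℝ := fun i => g i - μ with hf
  -- bound on sum over M
  have hMsum : |∑ i ∈ M, f i| ≤ t * c := by
    have h1 : |1 / (m:ℝ)| * |∑ i ∈ M, f i| ≤ t * c / m := by
      rw [← abs_mul]; exact hmean
    rw [abs_of_pos (by positivity : (0:ℝ) < 1 / m)] at h1
    have := mul_le_mul_of_nonneg_left h1 hm'.le
    calc |∑ i ∈ M, f i| = (m:ℝ) * (1 / m * |∑ i ∈ M, f i|) := by
          field_simp
      _ ≤ (m:ℝ) * (t * c / m) := this
      _ = t * c := by field_simp
  -- bound on sum over M \ C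
  have hMCsum : |∑ i ∈ M \ C, f i| ≤ β * (m:ℝ) * s := by
    calc |∑ i ∈ M \ C, f i| ≤ ∑ i ∈ M \ C, |f i| := Finset.abs_sum_le_sum_abs _ _
      _ ≤ ∑ i ∈ M \ C, s :=
          Finset.sum_le_sum fun i hi => hMbound i (Finset.mem_sdiff.mp hi).1
      _ = ((M \ C).card : ℝ) * s := by rw [Finset.sum_const, nsmul_eq_mul]
      _ ≤ β * m * s := mul_le_mul_of_nonneg_right hMC hs
  -- C \ M ⊆ B ∩ C
  have hsub : C \ M ⊆ B ∩ C := by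
    intro i hi
    rw [Finset.mem_sdiff, hpart, Finset.mem_compl, not_not] at hi
    exact Finset.mem_inter.mpr ⟨hi.2, hi.1⟩
  have hcardCB : ((C \ M).card : ℝ) ≤ β * m := by
    have h1 : (C \ M).card ≤ B.card :=
      le_trans (Finset.card_le_card hsub) (Finset.card_le_card (Finset.inter_subset_left))
    calc ((C \ M).card : ℝ) ≤ (B.card : ℝ) := by exact_mod_cast h1
      _ ≤ α * m := hB
      _ ≤ β * m := mul_le_mul_of_nonneg_right hαβ hm'.le
  have hCBsum : |∑ i ∈ C \ M, f i| ≤ β * (m:ℝ) * (2 * s) := by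
    calc |∑ i ∈ C \ M, f i| ≤ ∑ i ∈ C \ M, |f i| := Finset.abs_sum_le_sum_abs _ _
      _ ≤ ∑ i ∈ C \ M, (2 * s) := Finset.sum_le_sum fun i hi => hBC i (hsub hi)
      _ = ((C \ M).card : ℝ) * (2 * s) := by rw [Finset.sum_const, nsmul_eq_mul]
      _ ≤ β * m * (2 * s) := mul_le_mul_of_nonneg_right hcardCB (by positivity)
  -- key bound
  have hkey : |∑ i ∈ C, f i| ≤ t * c + 3 * β * s * m := by
    have hsplitC : ∑ i ∈ C, f i = ∑ i ∈ C ∩ M, f i + ∑ i ∈ C \ M, f i :=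
      (Finset.sum_inter_add_sum_sdiff C M f).symm
    have hsplitM : ∑ i ∈ C ∩ M, f i = ∑ i ∈ M, f i - ∑ i ∈ M \ C, f i := by
      rw [Finset.inter_comm, ← Finset.sum_inter_add_sum_sdiff M C f]; ring
    rw [hsplitC, hsplitM]
    calc |∑ i ∈ M, f i - ∑ i ∈ M \ C, f i + ∑ i ∈ C \ M, f i|
        ≤ |∑ i ∈ M, f i| + |∑ i ∈ M \ C, f i| + |∑ i ∈ C \ M, f i| := by
          exact (abs_add_le _ _).trans (add_le_add_left (abs_sub _ _) _)
      _ ≤ t * c + β * m * s + β * m * (2 * s) := by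
          exact add_le_add (add_le_add hMsum hMCsum) hCBsum
      _ = t * c + 3 * β * s * m := by ring
  have heq : (1 / c) * ∑ i ∈ C, g i - μ = (1 / c) * ∑ i ∈ C, f i := by
    simp only [hf, Finset.sum_sub_distrib, Finset.sum_const, nsmul_eq_mul]
    field_simp
    rw [← hc]; ring
  have hfirst : |(1 / c) * ∑ i ∈ C, g i - μ| ≤ t + 3 * β * s * ((m:ℝ) / c) := by
    rw [heq, abs_mul, abs_of_pos (by positivity : (0:ℝ) < 1 / c)]
    calc (1 / c) * |∑ i ∈ C, f i| ≤ (1 / c) * (t * c + 3 * β * s * m) :=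
          mul_le_mul_of_nonneg_left hkey (by positivity)
      _ = t + 3 * β * s * ((m:ℝ) / c) := by field_simp
  refine ⟨hfirst, hfirst.trans ?_⟩
  have hmc : (m:ℝ) / c ≤ 2 := by
    rw [div_le_iff₀ hc0]; linarith
  have : 3 * β * s * ((m:ℝ) / c) ≤ 3 * β * s * 2 :=
    mul_le_mul_of_nonneg_left hmc (by positivity)
  linarith
end

section
/- Let F : ℝ^d → ℝ be differentiable, λ-strongly convex with G-Lipschitz gradient (λ ≤ G), and minimizer w*. Let η = 1/G, and suppose at each step t the update is w^{t+1} = w^t − η·g^t where ‖g^t − ∇F(w^t)‖ ≤ Δ for all t. Let κ = 1 − λ/(G + λ). Then for all T ≥ 0, ‖w^T − w*‖ ≤ κ^T·‖w^0 − w*‖ + (Δ/G)·∑_{k=0}^{T−1} κ^k ≤ κ^T·‖w^0 − w*‖ + (Δ/G)·(G + λ)/λ. -/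
/-!
Subtracting the strong-convexity quadratic, `φ = F - λ/2 ‖·‖²` is convex and its Bregman
divergence is bounded by `(G - λ)/2 ‖y - x‖²`, so `∇φ` is co-coercive. Co-coercivity of `∇φ`
between `x` and the minimiser `w*` (where `∇F w* = 0`) makes the exact step `x - ∇F x / G` a
`(1 - λ/G)`-contraction towards `w*`, and `1 - λ/G ≤ κ`. The gradient error moves the iterate by at
most `Δ/G`, so `‖w (t+1) - w*‖ ≤ κ ‖w t - w*‖ + Δ/G`; unrolling gives the geometric bound, and
`∑ κ^k ≤ 1/(1 - κ) = (G + λ)/λ`.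
-/

open Finset RealInnerProductSpace

section InnerProductSpace

variable {E : Type*} [NormedAddCommGroup E] [InnerProductSpace ℝ E]

def bregman (φ : E → ℝ) (D : E → E) (x y : E) : ℝ := φ y - φ x - ⟪D x, y - x⟫

lemma bregman_sub_half_sq (φ : E → ℝ) (D : E → E) (μ : ℝ) (x y : E) :
    bregman (fun z => φ z - μ / 2 * ‖z‖ ^ 2) (fun z => D z - μ • z) x y
      = bregman φ D x y - μ / 2 * ‖y - x‖ ^ 2 := by
  have hsq := norm_add_sq_real x (y - x)
  rw [add_sub_cancel] at hsq
  simp only [bregman, inner_sub_left, real_inner_smul_left]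
  linear_combination (-μ / 2) * hsq

lemma bregman_add_bregman_swap (φ : E → ℝ) (D : E → E) (x y : E) :
    bregman φ D x y + bregman φ D y x = ⟪D x - D y, x - y⟫ := by
  simp only [bregman, inner_sub_left, ← neg_sub x y, inner_neg_right]
  ring

variable {φ : E → ℝ} {D : E → E} {L : ℝ}

lemma mul_norm_sq_le_bregman (hlow : ∀ x y, 0 ≤ bregman φ D x y)
    (hup : ∀ x y, bregman φ D x y ≤ L / 2 * ‖y - x‖ ^ 2) (x y : E) (t : ℝ) :
    (t - L / 2 * t ^ 2) * ‖D x - D y‖ ^ 2 ≤ bregman φ D x y := by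
  set c := D y - D x
  have hlow' := hlow x (y - t • c)
  have hup' := hup y (y - t • c)
  have hx : ⟪D x, y - t • c - x⟫ = ⟪D x, y - x⟫ - t * ⟪D x, c⟫ := by
    rw [sub_right_comm, inner_sub_right, real_inner_smul_right]
  have hy : ⟪D y, y - t • c - y⟫ = -(t * ⟪D y, c⟫) := by
    rw [sub_sub_cancel_left, inner_neg_right, real_inner_smul_right]
  have hnorm : ‖y - t • c - y‖ ^ 2 = t ^ 2 * ‖D x - D y‖ ^ 2 := by
    rw [sub_sub_cancel_left, norm_neg, norm_smul, mul_pow, Real.norm_eq_abs, sq_abs, norm_sub_rev]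
  have hc : t * ⟪D y, c⟫ - t * ⟪D x, c⟫ = t * ‖D x - D y‖ ^ 2 := by
    rw [← mul_sub, ← inner_sub_left, real_inner_self_eq_norm_sq, norm_sub_rev]
  unfold bregman at hlow' hup' ⊢
  rw [hx] at hlow'
  rw [hy, hnorm] at hup'
  linarith

lemma norm_sub_sq_le_mul_inner_of_bregman (hL : 0 ≤ L) (hlow : ∀ x y, 0 ≤ bregman φ D x y)
    (hup : ∀ x y, bregman φ D x y ≤ L / 2 * ‖y - x‖ ^ 2) (x y : E) :
    ‖D x - D y‖ ^ 2 ≤ L * ⟪D x - D y, x - y⟫ := by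
  set s := ‖D x - D y‖ ^ 2
  set p := ⟪D x - D y, x - y⟫
  -- Taking `t = 1 / L` would exclude `L = 0`; the discriminant argument covers it.
  have hquad : ∀ t : ℝ, 0 ≤ (L * s) * (t * t) + (-2 * s) * t + p := by
    intro t
    have h₁ := mul_norm_sq_le_bregman hlow hup x y t
    have h₂ := mul_norm_sq_le_bregman hlow hup y x t
    rw [← norm_neg, neg_sub] at h₂
    have hsum := bregman_add_bregman_swap φ D x y
    nlinarith
  have hdisc := discrim_le_zero hquad
  have hp : 0 ≤ p := by simpa using hquad 0
  unfold discrim at hdisc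
  nlinarith [mul_nonneg hL hp, sq_nonneg ‖D x - D y‖]


lemma norm_sub_one_div_smul_le {v g : E} {μ G : ℝ} (hG : 0 < G) (hμG : μ ≤ G)
    (hcoco : ‖g - μ • v‖ ^ 2 ≤ (G - μ) * ⟪g - μ • v, v⟫) :
    ‖v - (1 / G) • g‖ ≤ (1 - μ / G) * ‖v‖ := by
  set b := g - μ • v
  have hcoef : 0 ≤ 1 - μ / G := by rw [sub_nonneg, div_le_one hG]; exact hμG
  have hsplit : v - (1 / G) • g = (1 - μ / G) • v - (1 / G) • b := by
    simp only [b, smul_sub, smul_smul, sub_smul, one_smul]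
    rw [one_div_mul_eq_div]
    abel
  have hexpand : ‖v - (1 / G) • g‖ ^ 2 = (1 - μ / G) ^ 2 * ‖v‖ ^ 2
      + (‖b‖ ^ 2 - 2 * (G - μ) * ⟪b, v⟫) / G ^ 2 := by
    rw [hsplit, norm_sub_sq_real, norm_smul, norm_smul, real_inner_smul_left,
      real_inner_smul_right, real_inner_comm, Real.norm_of_nonneg hcoef,
      Real.norm_of_nonneg (one_div_pos.mpr hG).le]
    field_simp
    ring
  have hcross : 0 ≤ (G - μ) * ⟪b, v⟫ := (sq_nonneg _).trans hcoco
  have hremainder : (‖b‖ ^ 2 - 2 * (G - μ) * ⟪b, v⟫) / G ^ 2 ≤ 0 :=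
    div_nonpos_of_nonpos_of_nonneg (by linarith) (sq_nonneg G)
  refine (pow_le_pow_iff_left₀ (norm_nonneg _) (by positivity) two_ne_zero).mp ?_
  rw [hexpand, mul_pow]
  linarith

variable [CompleteSpace E]

lemma bregman_gradient_le_of_lipschitz {F : E → ℝ} {G : ℝ} (hdiff : Differentiable ℝ F)
    (hsmooth : ∀ x y, ‖gradient F x - gradient F y‖ ≤ G * ‖x - y‖) (x y : E) :
    bregman F (gradient F) x y ≤ G / 2 * ‖y - x‖ ^ 2 := by
  set v := y - x
  let ψ : ℝ → ℝ := fun t => F (x + t • v) - t * ⟪gradient F x, v⟫ - G / 2 * t ^ 2 * ‖v‖ ^ 2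
  have hψ : ∀ t, HasDerivAt ψ (⟪gradient F (x + t • v) - gradient F x, v⟫ - G * t * ‖v‖ ^ 2) t := by
    intro t
    have hline : HasDerivAt (fun t : ℝ => x + t • v) v t := by
      simpa using ((hasDerivAt_id t).smul_const v).const_add x
    have hF := (hdiff (x + t • v)).hasFDerivAt.comp_hasDerivAt t hline
    rw [← inner_gradient_left] at hF
    have hquad := ((hasDerivAt_pow 2 t).const_mul (G / 2)).mul_const (‖v‖ ^ 2)
    refine ((hF.sub ((hasDerivAt_id t).mul_const ⟪gradient F x, v⟫)).sub hquad).congr_deriv ?_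
    rw [inner_sub_left]
    ring
  obtain ⟨c, hc, hslope⟩ := exists_hasDerivAt_eq_slope ψ _ zero_lt_one
    (fun t _ => (hψ t).continuousAt.continuousWithinAt) (fun t _ => hψ t)
  have hderiv : ⟪gradient F (x + c • v) - gradient F x, v⟫ ≤ G * c * ‖v‖ ^ 2 := calc
    _ ≤ ‖gradient F (x + c • v) - gradient F x‖ * ‖v‖ := real_inner_le_norm _ _
    _ ≤ G * ‖c • v‖ * ‖v‖ := by
        gcongr
        simpa using hsmooth (x + c • v) x
    _ = G * c * ‖v‖ ^ 2 := by rw [norm_smul, Real.norm_of_nonneg hc.1.le]; ring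
  have hψ01 : ψ 1 ≤ ψ 0 := by
    rw [sub_zero, div_one] at hslope
    linarith
  simp only [ψ, one_smul, zero_smul, add_zero, add_sub_cancel, zero_mul, sub_zero, one_pow,
    one_mul, v] at hψ01
  unfold bregman
  linarith

lemma norm_gradient_step_sub_le {F : E → ℝ} {μ G : ℝ} (hG : 0 < G) (hμG : μ ≤ G)
    (hdiff : Differentiable ℝ F)
    (hsc : ∀ x y, F y ≥ F x + ⟪gradient F x, y - x⟫ + μ / 2 * ‖y - x‖ ^ 2)
    (hsmooth : ∀ x y, ‖gradient F x - gradient F y‖ ≤ G * ‖x - y‖)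
    {xstar : E} (hgrad : gradient F xstar = 0) (x : E) :
    ‖x - (1 / G) • gradient F x - xstar‖ ≤ (1 - μ / G) * ‖x - xstar‖ := by
  have hcoco := norm_sub_sq_le_mul_inner_of_bregman (φ := fun z => F z - μ / 2 * ‖z‖ ^ 2)
    (D := fun z => gradient F z - μ • z) (sub_nonneg.2 hμG)
    (fun x y => by rw [bregman_sub_half_sq]; unfold bregman; linarith [hsc x y])
    (fun x y => by
      rw [bregman_sub_half_sq]
      linarith [bregman_gradient_le_of_lipschitz hdiff hsmooth x y])
    x xstar
  have hD : gradient F x - μ • x - (gradient F xstar - μ • xstar)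
      = gradient F x - μ • (x - xstar) := by
    rw [hgrad, smul_sub]
    abel
  rw [hD] at hcoco
  rw [sub_right_comm]
  exact norm_sub_one_div_smul_le hG hμG hcoco

end InnerProductSpace

lemma le_pow_mul_add_mul_geom_sum {R : Type*} [CommSemiring R] [PartialOrder R] [IsOrderedRing R]
    {a : ℕ → R} {κ c : R} (hκ : 0 ≤ κ) (hstep : ∀ t, a (t + 1) ≤ κ * a t + c) (T : ℕ) :
    a T ≤ κ ^ T * a 0 + c * ∑ k ∈ range T, κ ^ k := by
  induction T with
  | zero => simp
  | succ T ih =>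
    calc a (T + 1) ≤ κ * a T + c := hstep T
      _ ≤ κ * (κ ^ T * a 0 + c * ∑ k ∈ range T, κ ^ k) + c := by gcongr
      _ = κ ^ (T + 1) * a 0 + c * ∑ k ∈ range (T + 1), κ ^ k := by
        rw [geom_sum_succ]
        ring

lemma geom_sum_le_one_div_one_sub {K : Type*} [Field K] [LinearOrder K] [IsStrictOrderedRing K]
    {κ : K} (hκ₀ : 0 ≤ κ) (hκ₁ : κ < 1) (T : ℕ) : ∑ k ∈ range T, κ ^ k ≤ 1 / (1 - κ) := by
  have h := geom_sum_Ico_le_of_lt_one (m := 0) (n := T) hκ₀ hκ₁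
  rwa [pow_zero, ← range_eq_Ico] at h

theorem stmt3_general (d : ℕ) (F : EuclideanSpace ℝ (Fin d) → ℝ) (lam G Δ : ℝ)
    (hlam : 0 < lam) (hG : 0 < G) (hlamG : lam ≤ G)
    (hdiff : Differentiable ℝ F)
    (hsc : ∀ x y, F y ≥ F x + (inner ℝ (gradient F x) (y - x) : ℝ) + (lam / 2) * ‖y - x‖ ^ 2)
    (hsmooth : ∀ x y, ‖gradient F x - gradient F y‖ ≤ G * ‖x - y‖)
    (wstar : EuclideanSpace ℝ (Fin d)) (hmin : ∀ w, F wstar ≤ F w)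
    (w : ℕ → EuclideanSpace ℝ (Fin d)) (gt : ℕ → EuclideanSpace ℝ (Fin d))
    (hupd : ∀ t, w (t + 1) = w t - (1 / G) • gt t)
    (herr : ∀ t, ‖gt t - gradient F (w t)‖ ≤ Δ) :
    ∀ T : ℕ,
      ‖w T - wstar‖ ≤
          (1 - lam / (G + lam)) ^ T * ‖w 0 - wstar‖ +
            (Δ / G) * ∑ k ∈ Finset.range T, (1 - lam / (G + lam)) ^ k ∧
      ‖w T - wstar‖ ≤
          (1 - lam / (G + lam)) ^ T * ‖w 0 - wstar‖ + (Δ / G) * ((G + lam) / lam) := by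
  have hgrad : gradient F wstar = 0 := by
    have hloc : IsLocalMin F wstar := Filter.Eventually.of_forall hmin
    rw [gradient, hloc.fderiv_eq_zero, map_zero]
  have hκG : 1 - lam / G ≤ 1 - lam / (G + lam) := by gcongr; linarith
  set κ := 1 - lam / (G + lam)
  have hκ₀ : 0 ≤ κ := by rw [sub_nonneg, div_le_one (by positivity)]; linarith
  have hκ₁ : κ < 1 := by have := div_pos hlam (add_pos hG hlam); linarith
  have hstep : ∀ t, ‖w (t + 1) - wstar‖ ≤ κ * ‖w t - wstar‖ + Δ / G := fun t => calc
    ‖w (t + 1) - wstar‖ ≤ ‖w t - (1 / G) • gradient F (w t) - wstar‖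
        + ‖(1 / G) • (gt t - gradient F (w t))‖ :=
      (norm_sub_le _ _).trans_eq' (by rw [hupd, smul_sub]; congr 1; abel)
    _ ≤ (1 - lam / G) * ‖w t - wstar‖ + 1 / G * Δ := by
      rw [norm_smul, Real.norm_of_nonneg (by positivity)]
      gcongr
      · exact norm_gradient_step_sub_le hG hlamG hdiff hsc hsmooth hgrad _
      · exact herr t
    _ ≤ κ * ‖w t - wstar‖ + Δ / G := by
      rw [one_div_mul_eq_div]
      gcongr
  intro T
  have hrec := le_pow_mul_add_mul_geom_sum (a := fun t => ‖w t - wstar‖) hκ₀ hstep T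
  refine ⟨hrec, hrec.trans ?_⟩
  have hΔ : 0 ≤ Δ := (norm_nonneg _).trans (herr 0)
  gcongr
  calc _ ≤ 1 / (1 - κ) := geom_sum_le_one_div_one_sub hκ₀ hκ₁ T
    _ = (G + lam) / lam := by rw [sub_sub_cancel, one_div_div]

/-- Inexact gradient descent convergence for strongly convex smooth functions. -/
theorem stmt3 (d : ℕ) (F : EuclideanSpace ℝ (Fin d) → ℝ) (lam G Δ : ℝ)
    (hlam : 0 < lam) (hG : 0 < G) (hlamG : lam ≤ G) (hΔ : 0 ≤ Δ)
    (hdiff : Differentiable ℝ F)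
    (hsc : ∀ x y, F y ≥ F x + (inner ℝ (gradient F x) (y - x) : ℝ) + (lam / 2) * ‖y - x‖ ^ 2)
    (hsmooth : ∀ x y, ‖gradient F x - gradient F y‖ ≤ G * ‖x - y‖)
    (wstar : EuclideanSpace ℝ (Fin d)) (hmin : ∀ w, F wstar ≤ F w)
    (w : ℕ → EuclideanSpace ℝ (Fin d)) (gt : ℕ → EuclideanSpace ℝ (Fin d))
    (hupd : ∀ t, w (t + 1) = w t - (1 / G) • gt t)
    (herr : ∀ t, ‖gt t - gradient F (w t)‖ ≤ Δ) :
    ∀ T : ℕ,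
      ‖w T - wstar‖ ≤
          (1 - lam / (G + lam)) ^ T * ‖w 0 - wstar‖ +
            (Δ / G) * ∑ k ∈ Finset.range T, (1 - lam / (G + lam)) ^ k ∧
      ‖w T - wstar‖ ≤
          (1 - lam / (G + lam)) ^ T * ‖w 0 - wstar‖ + (Δ / G) * ((G + lam) / lam) :=
  stmt3_general d F lam G Δ hlam hG hlamG hdiff hsc hsmooth wstar hmin w gt hupd herr
end

section
/- Let F : ℝ^d → ℝ be differentiable, λ-strongly convex with G-Lipschitz gradient, minimizer w*, and let w^{t+1} = w^t − (1/G)·g^t with ‖g^t − ∇F(w^t)‖ ≤ Δ for all t. Then the limit superior of ‖w^T − w*‖ as T → ∞ is at most (Δ/G)·(G + λ)/λ ≤ 2Δ/λ (when λ ≤ G). -/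
/-! The exact step `u ↦ u - (1 / G) • ∇F u` contracts towards the minimizer `w*`: the function
`F - λ/2 ‖·‖²` is convex with `(G - λ)`-Lipschitz gradient, hence its gradient is co-coercive,
which unfolds to `‖∇F u‖² + λG ‖u - w*‖² ≤ (G + λ) ⟪∇F u, u - w*⟫` and gives the contraction
factor `√((G - λ) / (G + λ)) ≤ G / (G + λ) =: ρ`. A gradient error of size `Δ` adds at most `Δ / G`
per step, so `e_{t+1} ≤ ρ e_t + Δ / G` for `e_t = ‖w_t - w*‖`, whose limsup is at most
`(Δ / G) / (1 - ρ) = (Δ / G) (G + λ) / λ ≤ 2Δ / λ`. -/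

open Filter Set Topology
open scoped RealInnerProductSpace Gradient

theorem image_one_le_of_hasDerivAt_sub_le {φ φ' : ℝ → ℝ} {C : ℝ}
    (hφ : ∀ t, HasDerivAt φ (φ' t) t) (hC : ∀ t ∈ Ico (0 : ℝ) 1, φ' t - φ' 0 ≤ C * t) :
    φ 1 ≤ φ 0 + φ' 0 + C / 2 := by
  have hB : ∀ t, HasDerivAt (fun t => φ 0 + t * φ' 0 + C / 2 * t ^ 2) (φ' 0 + C * t) t := by
    intro t
    have h := (((hasDerivAt_id' t).mul_const (φ' 0)).const_add (φ 0)).add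
      ((hasDerivAt_pow 2 t).const_mul (C / 2))
    exact h.congr_deriv (by norm_num; ring)
  have := image_le_of_deriv_right_le_deriv_boundary
    (fun t _ => (hφ t).continuousAt.continuousWithinAt)
    (fun t _ => (hφ t).hasDerivWithinAt) (by simp)
    (fun t _ => (hB t).continuousAt.continuousWithinAt)
    (fun t _ => (hB t).hasDerivWithinAt) (fun t ht => by linarith [hC t ht])
    (right_mem_Icc.2 zero_le_one)
  simpa using this

section Quadratic

variable {E : Type*} [NormedAddCommGroup E] [InnerProductSpace ℝ E]

theorem sq_norm_le_mul_of_forall_two_inner_le {u : E} {a P : ℝ} (ha : 0 ≤ a)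
    (h : ∀ v, 2 * ⟪u, v⟫ ≤ P + a * ‖v‖ ^ 2) : ‖u‖ ^ 2 ≤ a * P := by
  have hline : ∀ t : ℝ, 2 * t * ‖u‖ ^ 2 ≤ P + a * t ^ 2 * ‖u‖ ^ 2 := fun t => by
    have := h (t • u)
    rw [real_inner_smul_right, real_inner_self_eq_norm_sq, norm_smul, mul_pow,
      Real.norm_eq_abs, sq_abs] at this
    linarith
  rcases ha.eq_or_lt with rfl | ha_pos
  · by_contra hpos
    have hu : ‖u‖ ≠ 0 := fun h => hpos (by simp [h])
    have ht : 2 * ((P + 1) / (2 * ‖u‖ ^ 2)) * ‖u‖ ^ 2 = P + 1 := by field_simp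
    linarith [hline ((P + 1) / (2 * ‖u‖ ^ 2))]
  · have := hline a⁻¹
    field_simp at this
    nlinarith

variable {f : E → ℝ} {g : E → E} {μ L : ℝ}

theorem sq_norm_sub_le_mul_inner_of_convex_of_smooth (hL : 0 ≤ L)
    (hlow : ∀ x y, f x + ⟪g x, y - x⟫ ≤ f y)
    (hup : ∀ x y, f y ≤ f x + ⟪g x, y - x⟫ + L / 2 * ‖y - x‖ ^ 2) (x y : E) :
    ‖g x - g y‖ ^ 2 ≤ L * ⟪g x - g y, x - y⟫ := by
  refine sq_norm_le_mul_of_forall_two_inner_le hL fun v => ?_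
  have h₁ := hlow x (y + v)
  have h₂ := hup y (y + v)
  have h₃ := hlow y (x - v)
  have h₄ := hup x (x - v)
  simp only [add_sub_cancel_left, sub_sub_cancel_left, norm_neg, inner_add_right,
    inner_sub_right, inner_neg_right, inner_sub_left] at *
  linarith

theorem sq_norm_add_le_mul_inner_of_stronglyConvex_of_smooth (hμL : μ ≤ L)
    (hlow : ∀ x y, f x + ⟪g x, y - x⟫ + μ / 2 * ‖y - x‖ ^ 2 ≤ f y)
    (hup : ∀ x y, f y ≤ f x + ⟪g x, y - x⟫ + L / 2 * ‖y - x‖ ^ 2) (x y : E) :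
    ‖g x - g y‖ ^ 2 + μ * L * ‖x - y‖ ^ 2 ≤ (μ + L) * ⟪g x - g y, x - y⟫ := by
  have hshift : ∀ x y : E, (f y - μ / 2 * ‖y‖ ^ 2) - (f x - μ / 2 * ‖x‖ ^ 2)
      - ⟪g x - μ • x, y - x⟫ = f y - f x - ⟪g x, y - x⟫ - μ / 2 * ‖y - x‖ ^ 2 := fun x y => by
    rw [inner_sub_left, real_inner_smul_left, norm_sub_sq_real y x, inner_sub_right x y x,
      real_inner_self_eq_norm_sq x, real_inner_comm x y]
    ring
  have h := sq_norm_sub_le_mul_inner_of_convex_of_smooth (f := fun x => f x - μ / 2 * ‖x‖ ^ 2)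
    (g := fun x => g x - μ • x) (sub_nonneg.2 hμL)
    (fun x y => by linarith [hshift x y, hlow x y])
    (fun x y => by linarith [hshift x y, hup x y]) x y
  have hD : g x - μ • x - (g y - μ • y) = (g x - g y) - μ • (x - y) := by module
  rw [hD] at h
  generalize g x - g y = D at h ⊢
  generalize x - y = s at h ⊢
  rw [norm_sub_sq_real, inner_sub_left, real_inner_smul_left, real_inner_smul_right,
    norm_smul, real_inner_self_eq_norm_sq, mul_pow, Real.norm_eq_abs, sq_abs] at h
  linear_combination h

theorem sq_norm_sub_smul_le_of_sq_norm_add_le_mul_inner {s D : E} {μ L : ℝ} (hμ : 0 ≤ μ)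
    (hL : 0 < L) (hμL : μ ≤ L) (h : ‖D‖ ^ 2 + μ * L * ‖s‖ ^ 2 ≤ (μ + L) * ⟪D, s⟫) :
    ‖s - (1 / L) • D‖ ^ 2 ≤ (L - μ) / (L + μ) * ‖s‖ ^ 2 := by
  rw [norm_sub_sq_real, real_inner_smul_right, norm_smul, mul_pow, Real.norm_of_nonneg
    (by positivity), real_inner_comm, div_mul_eq_mul_div _ _ (‖s‖ ^ 2), le_div_iff₀ (by positivity)]
  field_simp
  nlinarith [mul_le_mul_of_nonneg_left h hL.le, mul_nonneg (sub_nonneg.2 hμL) (sq_nonneg ‖D‖)]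

end Quadratic

theorem limsup_le_div_of_le_mul_add {e : ℕ → ℝ} {ρ c : ℝ} (he : ∀ n, 0 ≤ e n) (hρ₀ : 0 ≤ ρ)
    (hρ₁ : ρ < 1) (hstep : ∀ n, e (n + 1) ≤ ρ * e n + c) :
    limsup e atTop ≤ c / (1 - ρ) := by
  have hK : ρ * (c / (1 - ρ)) + c = c / (1 - ρ) := by
    field_simp [sub_ne_zero.2 hρ₁.ne']
    ring
  set K := c / (1 - ρ)
  have hbound : ∀ n, e n ≤ ρ ^ n * (e 0 - K) + K := by
    intro n
    induction n with
    | zero => simp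
    | succ n ih =>
      calc e (n + 1) ≤ ρ * (ρ ^ n * (e 0 - K) + K) + c := (hstep n).trans (by gcongr)
        _ = ρ ^ (n + 1) * (e 0 - K) + K := by linear_combination hK
  have hlim : Tendsto (fun n => ρ ^ n * (e 0 - K) + K) atTop (𝓝 K) := by
    simpa using ((tendsto_pow_atTop_nhds_zero_of_lt_one hρ₀ hρ₁).mul_const (e 0 - K)).add_const K
  calc limsup e atTop ≤ limsup (fun n => ρ ^ n * (e 0 - K) + K) atTop :=
        limsup_le_limsup (Eventually.of_forall hbound) (isBoundedUnder_of ⟨0, he⟩).isCoboundedUnder_le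
          hlim.isBoundedUnder_le
    _ = K := hlim.limsup_eq

section Gradient

variable {E : Type*} [NormedAddCommGroup E] [InnerProductSpace ℝ E] [CompleteSpace E]
  {f : E → ℝ} {L : ℝ}

theorem Differentiable.hasDerivAt_comp_add_smul (hf : Differentiable ℝ f) (x v : E) (t : ℝ) :
    HasDerivAt (fun s : ℝ => f (x + s • v)) ⟪∇ f (x + t • v), v⟫ t := by
  have hline : HasDerivAt (fun s : ℝ => x + s • v) v t := by
    simpa using ((hasDerivAt_id t).smul_const v).const_add x
  have h := (hf (x + t • v)).hasGradientAt.hasFDerivAt.comp_hasDerivAt t hline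
  simp only [InnerProductSpace.toDual_apply_apply] at h
  exact h

theorem le_add_inner_add_of_lipschitz_gradient (hf : Differentiable ℝ f)
    (hL : ∀ x y, ‖∇ f x - ∇ f y‖ ≤ L * ‖x - y‖) (x y : E) :
    f y ≤ f x + ⟪∇ f x, y - x⟫ + L / 2 * ‖y - x‖ ^ 2 := by
  have h := image_one_le_of_hasDerivAt_sub_le (C := L * ‖y - x‖ ^ 2)
    (hf.hasDerivAt_comp_add_smul x (y - x)) fun t ht => by
      calc ⟪∇ f (x + t • (y - x)), y - x⟫ - ⟪∇ f (x + (0 : ℝ) • (y - x)), y - x⟫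
          = ⟪∇ f (x + t • (y - x)) - ∇ f x, y - x⟫ := by simp [inner_sub_left]
        _ ≤ ‖∇ f (x + t • (y - x)) - ∇ f x‖ * ‖y - x‖ := real_inner_le_norm _ _
        _ ≤ L * ‖t • (y - x)‖ * ‖y - x‖ := by
          gcongr
          simpa using hL (x + t • (y - x)) x
        _ = L * ‖y - x‖ ^ 2 * t := by
          rw [norm_smul, Real.norm_of_nonneg ht.1]; ring
  simp only [zero_smul, add_zero, one_smul, add_sub_cancel] at h
  linarith

theorem gradient_eq_zero_of_forall_le {x₀ : E} (hmin : ∀ x, f x₀ ≤ f x) : ∇ f x₀ = 0 := by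
  have hloc : IsLocalMin f x₀ := Eventually.of_forall hmin
  simp [gradient, hloc.fderiv_eq_zero]

theorem norm_sub_smul_gradient_sub_le_of_stronglyConvex {μ : ℝ} (hμ : 0 ≤ μ) (hL : 0 < L)
    (hμL : μ ≤ L) (hf : Differentiable ℝ f)
    (hsc : ∀ x y, f x + ⟪∇ f x, y - x⟫ + μ / 2 * ‖y - x‖ ^ 2 ≤ f y)
    (hsmooth : ∀ x y, ‖∇ f x - ∇ f y‖ ≤ L * ‖x - y‖) {x₀ : E} (hmin : ∀ x, f x₀ ≤ f x) (u : E) :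
    ‖u - (1 / L) • ∇ f u - x₀‖ ≤ L / (L + μ) * ‖u - x₀‖ := by
  have hcoco := sq_norm_add_le_mul_inner_of_stronglyConvex_of_smooth hμL hsc
    (le_add_inner_add_of_lipschitz_gradient hf hsmooth) u x₀
  rw [gradient_eq_zero_of_forall_le hmin, sub_zero] at hcoco
  have hsq := sq_norm_sub_smul_le_of_sq_norm_add_le_mul_inner hμ hL hμL hcoco
  have hrate : (L - μ) / (L + μ) ≤ (L / (L + μ)) ^ 2 := by
    rw [div_pow, div_le_div_iff₀ (by positivity) (by positivity)]
    nlinarith [mul_nonneg (mul_nonneg hμ hμ) (by positivity : 0 ≤ L + μ)]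
  rw [sub_right_comm, ← pow_le_pow_iff_left₀ (norm_nonneg _) (by positivity) two_ne_zero, mul_pow]
  exact hsq.trans (by gcongr)

end Gradient

/-- Asymptotic error floor of inexact gradient descent. -/
theorem stmt4 (d : ℕ) (F : EuclideanSpace ℝ (Fin d) → ℝ) (lam G Δ : ℝ)
    (hlam : 0 < lam) (hG : 0 < G) (hlamG : lam ≤ G) (hΔ : 0 ≤ Δ)
    (hdiff : Differentiable ℝ F)
    (hsc : ∀ x y, F y ≥ F x + (inner ℝ (gradient F x) (y - x) : ℝ) + (lam / 2) * ‖y - x‖ ^ 2)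
    (hsmooth : ∀ x y, ‖gradient F x - gradient F y‖ ≤ G * ‖x - y‖)
    (wstar : EuclideanSpace ℝ (Fin d)) (hmin : ∀ w, F wstar ≤ F w)
    (w : ℕ → EuclideanSpace ℝ (Fin d)) (gt : ℕ → EuclideanSpace ℝ (Fin d))
    (hupd : ∀ t, w (t + 1) = w t - (1 / G) • gt t)
    (herr : ∀ t, ‖gt t - gradient F (w t)‖ ≤ Δ) :
    Filter.limsup (fun T : ℕ => ‖w T - wstar‖) Filter.atTop ≤ (Δ / G) * ((G + lam) / lam) ∧
    Filter.limsup (fun T : ℕ => ‖w T - wstar‖) Filter.atTop ≤ 2 * Δ / lam := by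
  have hstep : ∀ t, ‖w (t + 1) - wstar‖ ≤ G / (G + lam) * ‖w t - wstar‖ + Δ / G := fun t =>
    calc ‖w (t + 1) - wstar‖
        = ‖(w t - (1 / G) • ∇ F (w t) - wstar) - (1 / G) • (gt t - ∇ F (w t))‖ := by
          rw [hupd]; congr 1; module
      _ ≤ ‖w t - (1 / G) • ∇ F (w t) - wstar‖ + ‖(1 / G) • (gt t - ∇ F (w t))‖ :=
          norm_sub_le _ _
      _ ≤ G / (G + lam) * ‖w t - wstar‖ + Δ / G := by
          gcongr
          · exact norm_sub_smul_gradient_sub_le_of_stronglyConvex hlam.le hG hlamG hdiff hsc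
              hsmooth hmin (w t)
          · rw [norm_smul, Real.norm_of_nonneg (by positivity), one_div_mul_eq_div]
            gcongr
            exact herr t
  have hlim := limsup_le_div_of_le_mul_add (fun T => norm_nonneg (w T - wstar)) (by positivity)
    ((div_lt_one (by positivity)).2 (by linarith)) hstep
  have hfloor : Δ / G / (1 - G / (G + lam)) = Δ / G * ((G + lam) / lam) := by
    rw [one_sub_div (by positivity), add_sub_cancel_left, div_div_eq_mul_div, mul_div_assoc]
  rw [hfloor] at hlim
  refine ⟨hlim, hlim.trans ?_⟩
  rw [div_mul_div_comm, div_le_div_iff₀ (by positivity) hlam]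
  nlinarith [mul_nonneg (mul_nonneg hΔ hlam.le) (sub_nonneg.2 hlamG)]
end
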